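/- The abelianization G/[G,G] of G is free abelian of rank 2, with the images of a and b as a free basis; equivalently, for integers m, n one has aᵐbⁿ ∈ [G,G] if and only if m = 0 and n = 0. -/

import Mathlib

-- The generators `a` and `b` of the iterated monodromy group of `z^2-1`,
-- as functions on binary words (`false` = x = left, `true` = y = right),
-- defined by mutual recursion.
mutual
def aFun : List Bool → List Bool
  | [] => []
  | false :: w => true :: bFun w
  | true :: w => false :: w

def bFun : List Bool → List Bool
  | [] => []
  | false :: w => false :: aFun w
  | true :: w => true :: w
end

-- The inverses of `aFun`/`bFun`.
mutual
def aInv : List Bool → List Bool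
  | [] => []
  | true :: w => false :: bInv w
  | false :: w => true :: w

def bInv : List Bool → List Bool
  | [] => []
  | false :: w => false :: aInv w
  | true :: w => true :: w
end

mutual
theorem aFun_aInv : ∀ w, aFun (aInv w) = w
  | [] => rfl
  | true :: w => by simp [aInv, aFun, bFun_bInv w]
  | false :: w => by simp [aInv, aFun]

theorem bFun_bInv : ∀ w, bFun (bInv w) = w
  | [] => rfl
  | false :: w => by simp [bInv, bFun, aFun_aInv w]
  | true :: w => by simp [bInv, bFun]
end

mutual
theorem aInv_aFun : ∀ w, aInv (aFun w) = w
  | [] => rfl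
  | false :: w => by simp [aFun, aInv, bInv_bFun w]
  | true :: w => by simp [aFun, aInv]

theorem bInv_bFun : ∀ w, bInv (bFun w) = w
  | [] => rfl
  | false :: w => by simp [bFun, bInv, aInv_aFun w]
  | true :: w => by simp [bFun, bInv]
end

/-- `a` as a permutation of the set of binary words. -/
def aPerm : Equiv.Perm (List Bool) := ⟨aFun, aInv, aInv_aFun, aFun_aInv⟩
/-- `b` as a permutation of the set of binary words. -/
def bPerm : Equiv.Perm (List Bool) := ⟨bFun, bInv, bInv_bFun, bFun_bInv⟩

mutual
theorem aFun_length : ∀ w, (aFun w).length = w.length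
  | [] => rfl
  | false :: w => by simp [aFun, bFun_length w]
  | true :: w => by simp [aFun]

theorem bFun_length : ∀ w, (bFun w).length = w.length
  | [] => rfl
  | false :: w => by simp [bFun, aFun_length w]
  | true :: w => by simp [bFun]
end

mutual
theorem aFun_prefix : ∀ u v, u <+: v → aFun u <+: aFun v
  | [], v, _ => by simp [aFun]
  | false :: u, false :: v, h => by
      simp only [List.cons_prefix_cons] at h
      simpa [aFun, List.cons_prefix_cons] using bFun_prefix u v h.2
  | true :: u, true :: v, h => by
      simp only [List.cons_prefix_cons] at h
      simpa [aFun, List.cons_prefix_cons] using h.2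
  | false :: u, true :: v, h => by simp [List.cons_prefix_cons] at h
  | true :: u, false :: v, h => by simp [List.cons_prefix_cons] at h
  | _ :: u, [], h => by simp at h

theorem bFun_prefix : ∀ u v, u <+: v → bFun u <+: bFun v
  | [], v, _ => by simp [bFun]
  | false :: u, false :: v, h => by
      simp only [List.cons_prefix_cons] at h
      simpa [bFun, List.cons_prefix_cons] using aFun_prefix u v h.2
  | true :: u, true :: v, h => by
      simp only [List.cons_prefix_cons] at h
      simpa [bFun, List.cons_prefix_cons] using h.2
  | false :: u, true :: v, h => by simp [List.cons_prefix_cons] at h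
  | true :: u, false :: v, h => by simp [List.cons_prefix_cons] at h
  | _ :: u, [], h => by simp at h
end

/-- The group of automorphisms of the binary rooted tree: bijections of the set of
binary words preserving word length and the prefix relation. -/
def treeAut : Subgroup (Equiv.Perm (List Bool)) where
  carrier := {f | (∀ w, (f w).length = w.length) ∧ ∀ u v : List Bool, u <+: v → f u <+: f v}
  one_mem' := ⟨fun _ => rfl, fun _ _ h => h⟩
  mul_mem' := by
    rintro f g ⟨hf1, hf2⟩ ⟨hg1, hg2⟩
    exact ⟨fun w => (hf1 _).trans (hg1 w), fun u v h => hf2 _ _ (hg2 _ _ h)⟩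
  inv_mem' := by
    rintro f ⟨hf1, hf2⟩
    constructor
    · intro w
      have := hf1 (f⁻¹ w)
      simpa using this.symm
    · intro u v h
      have hlen : (f⁻¹ u).length ≤ (f⁻¹ v).length := by
        have h1 : (f⁻¹ u).length = u.length := by have := hf1 (f⁻¹ u); simpa using this.symm
        have h2 : (f⁻¹ v).length = v.length := by have := hf1 (f⁻¹ v); simpa using this.symm
        rw [h1, h2]; exact h.length_le
      set p := (f⁻¹ v).take (f⁻¹ u).length with hp
      have hpv : p <+: f⁻¹ v := List.take_prefix _ _
      have hplen : p.length = (f⁻¹ u).length := by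
        simp only [hp, List.length_take]; exact Nat.min_eq_left hlen
      have hfp : f p <+: v := by
        have := hf2 _ _ hpv
        simpa using this
      have hfplen : (f p).length = u.length := by
        rw [hf1 p, hplen]
        have := hf1 (f⁻¹ u); simpa using this.symm
      have : f p = u := by
        rcases List.prefix_or_prefix_of_prefix hfp h with h' | h'
        · exact h'.eq_of_length hfplen
        · exact (h'.eq_of_length hfplen.symm).symm
      have : p = f⁻¹ u := by
        have := congrArg (f⁻¹ : Equiv.Perm (List Bool)) this
        simpa using this
      rw [← this]; exact hpv

/-- The generator `a` as a tree automorphism. -/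
def A : treeAut := ⟨aPerm, aFun_length, aFun_prefix⟩
/-- The generator `b` as a tree automorphism. -/
def B : treeAut := ⟨bPerm, bFun_length, bFun_prefix⟩

/-- The iterated monodromy group of `z ↦ z² - 1`: the subgroup of the automorphism
group of the binary rooted tree generated by `a` and `b`. -/
def G : Subgroup treeAut := Subgroup.closure {A, B}

/-- Apply a tree automorphism to a binary word. -/
def app (g : treeAut) (w : List Bool) : List Bool := g.val w


section Basilica
open Subgroup

lemma app_length (g : treeAut) (w : List Bool) : (app g w).length = w.length := g.2.1 w
lemma app_prefix (g : treeAut) {u v : List Bool} (h : u <+: v) : app g u <+: app g v := g.2.2 u v h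
lemma app_mul (g h : treeAut) (w : List Bool) : app (g * h) w = app g (app h w) := rfl
lemma app_one (w : List Bool) : app 1 w = w := rfl
lemma app_inv_app (g : treeAut) (w : List Bool) : app g⁻¹ (app g w) = w :=
  Equiv.symm_apply_apply g.1 w
lemma app_app_inv (g : treeAut) (w : List Bool) : app g (app g⁻¹ w) = w :=
  Equiv.apply_symm_apply g.1 w

/-- The action of a tree automorphism on the first level. -/
def tau (g : treeAut) (c : Bool) : Bool := (app g [c]).headI

lemma app_singleton (g : treeAut) (c : Bool) : app g [c] = [tau g c] := by
  obtain ⟨a, ha⟩ := List.length_eq_one_iff.mp (app_length g [c])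
  rw [tau, ha]; rfl

/-- The section (state) of a tree automorphism at a first-level vertex, as a function. -/
def secFun (g : treeAut) (c : Bool) (w : List Bool) : List Bool := (app g (c :: w)).tail

lemma app_cons (g : treeAut) (c : Bool) (w : List Bool) :
    app g (c :: w) = tau g c :: secFun g c w := by
  have hp : [c] <+: c :: w := ⟨w, rfl⟩
  have h := app_prefix g hp
  rw [app_singleton] at h
  obtain ⟨t, ht⟩ := h
  rw [secFun, ← ht]; rfl

lemma secFun_length (g : treeAut) (c : Bool) (w : List Bool) :
    (secFun g c w).length = w.length := by
  have h := app_length g (c :: w)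
  rw [app_cons g c w] at h
  simpa using h

lemma secFun_prefix (g : treeAut) (c : Bool) {u v : List Bool} (h : u <+: v) :
    secFun g c u <+: secFun g c v := by
  have h2 := app_prefix g (List.cons_prefix_cons.mpr ⟨rfl, h⟩ : (c :: u) <+: (c :: v))
  rw [app_cons, app_cons] at h2
  exact (List.cons_prefix_cons.mp h2).2

lemma tau_mul (g h : treeAut) (c : Bool) : tau (g * h) c = tau g (tau h c) := by
  have h1 : app (g * h) [c] = app g (app h [c]) := app_mul g h [c]
  rw [app_singleton, app_singleton, app_singleton] at h1
  simpa using h1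

lemma secFun_mul (g h : treeAut) (c : Bool) (w : List Bool) :
    secFun (g * h) c w = secFun g (tau h c) (secFun h c w) := by
  have h1 : app (g * h) (c :: w) = app g (tau h c :: secFun h c w) := by
    rw [app_mul, app_cons]
  rw [app_cons, app_cons] at h1
  exact (List.cons_eq_cons.mp h1).2

lemma tau_inv_tau (g : treeAut) (c : Bool) : tau g⁻¹ (tau g c) = c := by
  have h1 : app g⁻¹ (app g [c]) = [c] := app_inv_app g [c]
  rw [app_singleton, app_singleton] at h1
  simpa using h1

lemma tau_tau_inv (g : treeAut) (c : Bool) : tau g (tau g⁻¹ c) = c := by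
  have h1 : app g (app g⁻¹ [c]) = [c] := app_app_inv g [c]
  rw [app_singleton, app_singleton] at h1
  simpa using h1

lemma tau_one (c : Bool) : tau 1 c = c := rfl

lemma tau_true_of_false {g : treeAut} (h : tau g false = false) : tau g true = true := by
  cases hc : tau g true with
  | false =>
      have := congrArg (tau g⁻¹) (hc.trans h.symm)
      rw [tau_inv_tau, tau_inv_tau] at this
      exact absurd this (by decide)
  | true => rfl

lemma tau_false_of_true {g : treeAut} (h : tau g false = true) : tau g true = false := by
  cases hc : tau g true with
  | false => rfl
  | true =>
      have := congrArg (tau g⁻¹) (hc.trans h.symm)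
      rw [tau_inv_tau, tau_inv_tau] at this
      exact absurd this (by decide)

lemma secFun_inv_secFun (g : treeAut) (c : Bool) (w : List Bool) :
    secFun g⁻¹ (tau g c) (secFun g c w) = w := by
  have h1 : app g⁻¹ (tau g c :: secFun g c w) = c :: w := by
    rw [← app_cons, app_inv_app]
  rw [app_cons] at h1
  exact (List.cons_eq_cons.mp h1).2

lemma secFun_secFun_inv (g : treeAut) (c : Bool) (w : List Bool) :
    secFun g c (secFun g⁻¹ (tau g c) w) = w := by
  have h1 : app g (tau g⁻¹ (tau g c) :: secFun g⁻¹ (tau g c) w) = tau g c :: w := by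
    rw [← app_cons, app_app_inv]
  rw [tau_inv_tau, app_cons] at h1
  exact (List.cons_eq_cons.mp h1).2

/-- The section of a tree automorphism at a first-level vertex. -/
def sec (g : treeAut) (c : Bool) : treeAut :=
  ⟨⟨secFun g c, secFun g⁻¹ (tau g c), secFun_inv_secFun g c, secFun_secFun_inv g c⟩,
    secFun_length g c, fun _ _ h => secFun_prefix g c h⟩

lemma app_sec (g : treeAut) (c : Bool) (w : List Bool) : app (sec g c) w = secFun g c w := rfl

lemma treeAut_ext {x y : treeAut} (h : ∀ w, app x w = app y w) : x = y :=
  Subtype.ext (Equiv.ext h)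

lemma sec_mul (g h : treeAut) (c : Bool) : sec (g * h) c = sec g (tau h c) * sec h c :=
  treeAut_ext fun w => by
    rw [app_mul, app_sec, app_sec, app_sec, secFun_mul]

lemma sec_one (c : Bool) : sec 1 c = 1 :=
  treeAut_ext fun w => rfl

lemma sec_inv (g : treeAut) (c : Bool) : sec g⁻¹ c = (sec g (tau g⁻¹ c))⁻¹ :=
  treeAut_ext fun w => by
    show secFun g⁻¹ c w = secFun g⁻¹ (tau g (tau g⁻¹ c)) w
    rw [tau_tau_inv]


lemma app_A (w : List Bool) : app A w = aFun w := rfl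
lemma app_B (w : List Bool) : app B w = bFun w := rfl

lemma tau_A_false : tau A false = true := by
  show (aFun [false]).headI = true
  simp [aFun]

lemma tau_B_false : tau B false = false := by
  show (bFun [false]).headI = false
  simp [bFun]

lemma sec_A_false : sec A false = B :=
  treeAut_ext fun w => by
    show (aFun (false :: w)).tail = bFun w
    simp [aFun]

lemma sec_A_true : sec A true = 1 :=
  treeAut_ext fun w => by
    show (aFun (true :: w)).tail = w
    simp [aFun]

lemma sec_B_false : sec B false = A :=
  treeAut_ext fun w => by
    show (bFun (false :: w)).tail = aFun w
    simp [bFun]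

lemma sec_B_true : sec B true = 1 :=
  treeAut_ext fun w => by
    show (bFun (true :: w)).tail = w
    simp [bFun]

lemma memA : A ∈ G := Subgroup.subset_closure (Set.mem_insert _ _)
lemma memB : B ∈ G := Subgroup.subset_closure (Set.mem_insert_of_mem _ rfl)

lemma sec_mem {g : treeAut} (hg : g ∈ G) (c : Bool) : sec g c ∈ G := by
  revert c
  refine Subgroup.closure_induction (p := fun g _ => ∀ c, sec g c ∈ G) ?_ ?_ ?_ ?_ hg
  · rintro x (rfl | rfl) c
    · cases c
      · rw [sec_A_false]; exact memB
      · rw [sec_A_true]; exact one_mem _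
    · cases c
      · rw [sec_B_false]; exact memA
      · rw [sec_B_true]; exact one_mem _
  · intro c; rw [sec_one]; exact one_mem _
  · intro x y _ _ ihx ihy c
    rw [sec_mul]; exact mul_mem (ihx _) (ihy _)
  · intro x _ ihx c
    rw [sec_inv]; exact inv_mem (ihx _)


lemma tau_inv_false_of_false {g : treeAut} (h : tau g false = false) : tau g⁻¹ false = false := by
  have := tau_inv_tau g false; rwa [h] at this
lemma tau_inv_true_of_false {g : treeAut} (h : tau g false = false) : tau g⁻¹ true = true := by
  have := tau_inv_tau g true; rwa [tau_true_of_false h] at this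
lemma tau_inv_false_of_true {g : treeAut} (h : tau g false = true) : tau g⁻¹ false = true := by
  have := tau_inv_tau g true; rwa [tau_false_of_true h] at this
lemma tau_inv_true_of_true {g : treeAut} (h : tau g false = true) : tau g⁻¹ true = false := by
  have := tau_inv_tau g false; rwa [h] at this

/-- The abelianization of `G`. -/
abbrev AbG := Abelianization (↥G)

/-- The section of an element of `G`, as an element of `G` (junk value otherwise). -/
noncomputable def secG (g : treeAut) (c : Bool) : ↥G :=
  letI := Classical.dec (g ∈ G)
  if hg : g ∈ G then ⟨sec g c, sec_mem hg c⟩ else 1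

lemma secG_val {g : treeAut} (hg : g ∈ G) (c : Bool) : (secG g c : treeAut) = sec g c := by
  simp [secG, hg]

/-- The image of a section in the abelianization of `G`. -/
noncomputable def om (g : treeAut) (c : Bool) : AbG := Abelianization.of (secG g c)

lemma om_mul {g h : treeAut} (hg : g ∈ G) (hh : h ∈ G) (c : Bool) :
    om (g * h) c = om g (tau h c) * om h c := by
  have e : secG (g * h) c = secG g (tau h c) * secG h c := by
    apply Subtype.ext
    rw [Subgroup.coe_mul, secG_val (mul_mem hg hh), secG_val hg, secG_val hh, sec_mul]
  rw [om, e, map_mul]; rfl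

lemma om_one (c : Bool) : om 1 c = 1 := by
  have e : secG 1 c = 1 := by
    apply Subtype.ext
    rw [secG_val (one_mem G), sec_one]; rfl
  rw [om, e, map_one]

lemma om_inv {g : treeAut} (hg : g ∈ G) (c : Bool) :
    om g⁻¹ c = (om g (tau g⁻¹ c))⁻¹ := by
  have e : secG g⁻¹ c = (secG g (tau g⁻¹ c))⁻¹ := by
    apply Subtype.ext
    rw [Subgroup.coe_inv, secG_val (inv_mem hg), secG_val hg, sec_inv]
  rw [om, e, map_inv]; rfl

/-- Image of `a` in the abelianization of `G`. -/
noncomputable def alA : AbG := Abelianization.of ⟨A, memA⟩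
/-- Image of `b` in the abelianization of `G`. -/
noncomputable def beB : AbG := Abelianization.of ⟨B, memB⟩

lemma om_A_false : om A false = beB := by
  rw [om, beB]; congr 1
  exact Subtype.ext (by rw [secG_val memA, sec_A_false])
lemma om_A_true : om A true = 1 := by
  have e : secG A true = 1 := Subtype.ext (by rw [secG_val memA, sec_A_true]; rfl)
  rw [om, e, map_one]
lemma om_B_false : om B false = alA := by
  rw [om, alA]; congr 1
  exact Subtype.ext (by rw [secG_val memB, sec_B_false])
lemma om_B_true : om B true = 1 := by
  have e : secG B true = 1 := Subtype.ext (by rw [secG_val memB, sec_B_true]; rfl)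
  rw [om, e, map_one]


noncomputable def dl (g : treeAut) : AbG := om g false * (om g true)⁻¹

noncomputable def Asub : Subgroup AbG := Subgroup.zpowers alA

lemma dl_spec {g : treeAut} (hg : g ∈ G) :
    (tau g false = false → dl g ∈ Asub) ∧ (tau g false = true → dl g * beB⁻¹ ∈ Asub) := by
  refine Subgroup.closure_induction
    (p := fun g _ => (tau g false = false → dl g ∈ Asub) ∧
      (tau g false = true → dl g * beB⁻¹ ∈ Asub)) ?_ ?_ ?_ ?_ hg
  · rintro x (rfl | rfl)
    · refine ⟨fun h => ?_, fun _ => ?_⟩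
      · rw [tau_A_false] at h; exact absurd h (by decide)
      · have e : dl A * beB⁻¹ = 1 := by
          rw [dl, om_A_false, om_A_true]; group
        rw [e]; exact one_mem _
    · refine ⟨fun _ => ?_, fun h => ?_⟩
      · have e : dl B = alA := by rw [dl, om_B_false, om_B_true]; group
        rw [e]; exact Subgroup.mem_zpowers _
      · rw [tau_B_false] at h; exact absurd h (by decide)
  · refine ⟨fun _ => ?_, fun h => ?_⟩
    · have e : dl 1 = 1 := by rw [dl, om_one, om_one]; group
      rw [e]; exact one_mem _
    · rw [tau_one] at h; exact absurd h (by decide)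
  · intro x y hx hy ihx ihy
    cases hyf : tau y false with
    | false =>
      have hyt := tau_true_of_false hyf
      have e : dl (x * y) = dl x * dl y := by
        rw [dl, om_mul hx hy, om_mul hx hy, hyf, hyt, dl, dl]
        simp [mul_inv, mul_comm, mul_left_comm, mul_assoc]
      have ht : tau (x * y) false = tau x false := by rw [tau_mul, hyf]
      refine ⟨fun h => ?_, fun h => ?_⟩
      · rw [ht] at h; rw [e]; exact mul_mem (ihx.1 h) (ihy.1 hyf)
      · rw [ht] at h
        have e2 : dl x * dl y * beB⁻¹ = dl x * beB⁻¹ * dl y := mul_right_comm _ _ _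
        rw [e, e2]; exact mul_mem (ihx.2 h) (ihy.1 hyf)
    | true =>
      have hyt := tau_false_of_true hyf
      have e : dl (x * y) = (dl x)⁻¹ * dl y := by
        rw [dl, om_mul hx hy, om_mul hx hy, hyf, hyt, dl, dl]
        simp [mul_inv, mul_comm, mul_left_comm, mul_assoc]
      have ht : tau (x * y) false = tau x true := by rw [tau_mul, hyf]
      cases hxf : tau x false with
      | false =>
        refine ⟨fun h => ?_, fun _ => ?_⟩
        · rw [ht, tau_true_of_false hxf] at h; exact absurd h (by decide)
        · have e2 : (dl x)⁻¹ * dl y * beB⁻¹ = (dl x)⁻¹ * (dl y * beB⁻¹) := mul_assoc _ _ _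
          rw [e, e2]; exact mul_mem (inv_mem (ihx.1 hxf)) (ihy.2 hyf)
      | true =>
        refine ⟨fun _ => ?_, fun h => ?_⟩
        · have e2 : (dl x)⁻¹ * dl y = (dl x * beB⁻¹)⁻¹ * (dl y * beB⁻¹) := by
            rw [mul_inv, inv_inv, mul_assoc, mul_left_comm beB (dl y) beB⁻¹,
              mul_inv_cancel, mul_one]
          rw [e, e2]; exact mul_mem (inv_mem (ihx.2 hxf)) (ihy.2 hyf)
        · rw [ht, tau_false_of_true hxf] at h; exact absurd h (by decide)
  · intro x hx ihx
    cases hxf : tau x false with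
    | false =>
      have h1 := tau_inv_false_of_false hxf
      have h2 := tau_inv_true_of_false hxf
      have e : dl x⁻¹ = (dl x)⁻¹ := by
        rw [dl, om_inv hx, om_inv hx, h1, h2, dl]
        simp [mul_inv, mul_comm, mul_left_comm, mul_assoc]
      refine ⟨fun _ => ?_, fun h => ?_⟩
      · rw [e]; exact inv_mem (ihx.1 hxf)
      · rw [h1] at h; exact absurd h (by decide)
    | true =>
      have h1 := tau_inv_false_of_true hxf
      have h2 := tau_inv_true_of_true hxf
      have e : dl x⁻¹ = dl x := by
        rw [dl, om_inv hx, om_inv hx, h1, h2, dl]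
        simp [mul_inv, mul_comm, mul_left_comm, mul_assoc]
      refine ⟨fun h => ?_, fun _ => ?_⟩
      · rw [h1] at h; exact absurd h (by decide)
      · rw [e]; exact ihx.2 hxf


lemma comm4 {M : Type*} [CommGroup M] (a b : M) : a * b * a⁻¹ * b⁻¹ = 1 := by
  rw [mul_right_comm, mul_inv_cancel_right, mul_inv_cancel]
lemma comm4b {M : Type*} [CommGroup M] (a b c : M) : a * b * a⁻¹ * c = b * c := by
  rw [mul_right_comm a b a⁻¹, mul_inv_cancel, one_mul]
lemma comm4c {M : Type*} [CommGroup M] (a b c : M) : a * b * c * b⁻¹ = a * c := by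
  rw [mul_right_comm (a * b) c b⁻¹, mul_inv_cancel_right]

def Hsub : Subgroup treeAut where
  carrier := {g | g ∈ G ∧ tau g false = false ∧ om g true ∈ Asub}
  one_mem' := ⟨one_mem _, tau_one false, by rw [om_one]; exact one_mem _⟩
  mul_mem' := by
    rintro g h ⟨hg, hgf, hgo⟩ ⟨hh, hhf, hho⟩
    refine ⟨mul_mem hg hh, by rw [tau_mul, hhf, hgf], ?_⟩
    rw [om_mul hg hh, tau_true_of_false hhf]
    exact mul_mem hgo hho
  inv_mem' := by
    rintro g ⟨hg, hgf, hgo⟩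
    refine ⟨inv_mem hg, tau_inv_false_of_false hgf, ?_⟩
    rw [om_inv hg, tau_inv_true_of_false hgf]
    exact inv_mem hgo

lemma comm_le_Hsub : ⁅G, G⁆ ≤ Hsub := by
  rw [Subgroup.commutator_le]
  intro g hg h hh
  rw [commutatorElement_def]
  have m1 : g * h ∈ G := mul_mem hg hh
  have m2 : g * h * g⁻¹ ∈ G := mul_mem m1 (inv_mem hg)
  refine ⟨mul_mem m2 (inv_mem hh), ?_, ?_⟩
  · rw [tau_mul, tau_mul, tau_mul]
    cases hgf : tau g false with
    | false =>
      cases hhf : tau h false with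
      | false =>
        rw [tau_inv_false_of_false hhf, tau_inv_false_of_false hgf, hhf, hgf]
      | true =>
        rw [tau_inv_false_of_true hhf, tau_inv_true_of_false hgf, tau_false_of_true hhf, hgf]
    | true =>
      cases hhf : tau h false with
      | false =>
        rw [tau_inv_false_of_false hhf, tau_inv_false_of_true hgf, tau_true_of_false hhf,
          tau_false_of_true hgf]
      | true =>
        rw [tau_inv_false_of_true hhf, tau_inv_true_of_true hgf, hhf, tau_false_of_true hgf]
  · rw [om_mul m2 (inv_mem hh), om_mul m1 (inv_mem hg), om_mul hg hh, om_inv hg, om_inv hh]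
    cases hgf : tau g false with
    | false =>
      cases hhf : tau h false with
      | false =>
        rw [tau_inv_true_of_false hhf, tau_inv_true_of_false hgf, tau_true_of_false hhf,
          comm4]
        exact one_mem _
      | true =>
        rw [tau_inv_true_of_true hhf, tau_inv_false_of_false hgf, hhf, comm4c]
        have e : om g true * (om g false)⁻¹ = (dl g)⁻¹ := by
          rw [dl, mul_inv, inv_inv, mul_comm]
        rw [e]
        exact inv_mem ((dl_spec hg).1 hgf)
    | true =>
      cases hhf : tau h false with
      | false =>
        rw [tau_inv_true_of_false hhf, tau_inv_true_of_true hgf, hhf, comm4b]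
        exact (dl_spec hh).1 hhf
      | true =>
        rw [tau_inv_true_of_true hhf, tau_inv_false_of_true hgf, tau_false_of_true hhf]
        have e : om g false * om h true * (om g true)⁻¹ * (om h false)⁻¹
            = dl g * (dl h)⁻¹ := by
          rw [dl, dl, mul_inv, inv_inv]
          simp [mul_comm, mul_left_comm, mul_assoc]
        have e2 : (dl g * beB⁻¹) * (dl h * beB⁻¹)⁻¹ = dl g * (dl h)⁻¹ := by
          rw [mul_inv, inv_inv, mul_mul_mul_comm, inv_mul_cancel, mul_one]
        rw [e, ← e2]
        exact mul_mem ((dl_spec hg).2 hgf) (inv_mem ((dl_spec hh).2 hhf))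


/-- Activity (level-one swap) of a tree automorphism, in `ZMod 2`. -/
def actZ (g : treeAut) : ZMod 2 := if tau g false then 1 else 0

lemma actZ_mul (g h : treeAut) : actZ (g * h) = actZ g + actZ h := by
  rw [actZ, actZ, actZ, tau_mul]
  cases hh : tau h false with
  | false => simp
  | true =>
    cases hg : tau g false with
    | false => rw [tau_true_of_false hg]; decide
    | true => rw [tau_false_of_true hg]; decide

/-- The level-one sign homomorphism. -/
def e1 : treeAut →* Multiplicative (ZMod 2) :=
  MonoidHom.mk' (fun g => Multiplicative.ofAdd (actZ g)) (fun g h => by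
    show Multiplicative.ofAdd (actZ (g * h))
        = Multiplicative.ofAdd (actZ g) * Multiplicative.ofAdd (actZ h)
    rw [actZ_mul]; exact ofAdd_add _ _)

/-- The level-two sign homomorphism. -/
def e2 : treeAut →* Multiplicative (ZMod 2) :=
  MonoidHom.mk' (fun g => Multiplicative.ofAdd (actZ (sec g false) + actZ (sec g true)))
    (fun g h => by
      show Multiplicative.ofAdd (actZ (sec (g * h) false) + actZ (sec (g * h) true))
          = Multiplicative.ofAdd (actZ (sec g false) + actZ (sec g true)) *
            Multiplicative.ofAdd (actZ (sec h false) + actZ (sec h true))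
      rw [← ofAdd_add]
      apply congrArg Multiplicative.ofAdd
      rw [sec_mul, sec_mul, actZ_mul, actZ_mul]
      cases hh : tau h false with
      | false => rw [tau_true_of_false hh]; ring
      | true => rw [tau_false_of_true hh]; ring)

lemma e1_A : e1 A = Multiplicative.ofAdd 1 := by
  show Multiplicative.ofAdd (actZ A) = _
  rw [actZ, tau_A_false]; rfl
lemma e1_B : e1 B = 1 := by
  show Multiplicative.ofAdd (actZ B) = 1
  rw [actZ, tau_B_false]; rfl
lemma e2_A : e2 A = 1 := by
  show Multiplicative.ofAdd (actZ (sec A false) + actZ (sec A true)) = 1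
  rw [sec_A_false, sec_A_true, actZ, actZ, tau_B_false, tau_one]; rfl
lemma e2_B : e2 B = Multiplicative.ofAdd 1 := by
  show Multiplicative.ofAdd (actZ (sec B false) + actZ (sec B true)) = _
  rw [sec_B_false, sec_B_true, actZ, actZ, tau_A_false, tau_one]; rfl

lemma mem_comm_iff (x : ↥G) :
    (x : treeAut) ∈ ⁅G, G⁆ ↔ Abelianization.of x = 1 := by
  have h1 : ⁅G, G⁆ = Subgroup.map G.subtype (commutator ↥G) := by
    rw [commutator_def, Subgroup.map_commutator, ← MonoidHom.range_eq_map,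
      Subgroup.range_subtype]
  rw [h1]
  constructor
  · rintro ⟨y, hy, hxy⟩
    have hyx : y = x := Subtype.ext hxy
    exact (QuotientGroup.eq_one_iff x).mpr (hyx ▸ hy)
  · intro hx
    exact ⟨x, (QuotientGroup.eq_one_iff x).mp hx, rfl⟩

lemma ab_iff (m n : ℤ) : (A ^ m * B ^ n ∈ ⁅G, G⁆) ↔ alA ^ m * beB ^ n = 1 := by
  have hval : (((⟨A, memA⟩ : ↥G) ^ m * (⟨B, memB⟩ : ↥G) ^ n : ↥G) : treeAut)
      = A ^ m * B ^ n := by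
    push_cast
    rfl
  rw [← hval, mem_comm_iff, map_mul, map_zpow, map_zpow]
  rfl

noncomputable def theta0 : ↥G →* AbG :=
  MonoidHom.mk' (fun x => om x.1 false * om x.1 true) (fun x y => by
    show om ((x * y : ↥G) : treeAut) false * om ((x * y : ↥G) : treeAut) true
        = (om (x : treeAut) false * om (x : treeAut) true) *
          (om (y : treeAut) false * om (y : treeAut) true)
    rw [Subgroup.coe_mul, om_mul x.2 y.2, om_mul x.2 y.2]
    cases hyf : tau (y : treeAut) false with
    | false => rw [tau_true_of_false hyf]; simp [mul_comm, mul_left_comm, mul_assoc]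
    | true => rw [tau_false_of_true hyf]; simp [mul_comm, mul_left_comm, mul_assoc])

noncomputable def thetaH : AbG →* AbG := Abelianization.lift theta0

lemma thetaH_alA : thetaH alA = beB := by
  show thetaH (Abelianization.of ⟨A, memA⟩) = beB
  rw [thetaH, Abelianization.lift_apply_of]
  show om A false * om A true = beB
  rw [om_A_false, om_A_true, mul_one]

lemma thetaH_beB : thetaH beB = alA := by
  show thetaH (Abelianization.of ⟨B, memB⟩) = alA
  rw [thetaH, Abelianization.lift_apply_of]
  show om B false * om B true = alA
  rw [om_B_false, om_B_true, mul_one]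

noncomputable def E1 : AbG →* Multiplicative (ZMod 2) :=
  Abelianization.lift (e1.comp G.subtype)
noncomputable def E2 : AbG →* Multiplicative (ZMod 2) :=
  Abelianization.lift (e2.comp G.subtype)

lemma E1_alA : E1 alA = Multiplicative.ofAdd 1 := by
  rw [alA, E1, Abelianization.lift_apply_of]; exact e1_A
lemma E1_beB : E1 beB = 1 := by
  rw [beB, E1, Abelianization.lift_apply_of]; exact e1_B
lemma E2_alA : E2 alA = 1 := by
  rw [alA, E2, Abelianization.lift_apply_of]; exact e2_A
lemma E2_beB : E2 beB = Multiplicative.ofAdd 1 := by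
  rw [beB, E2, Abelianization.lift_apply_of]; exact e2_B

lemma zmod_exp {x : AbG} (f : AbG →* Multiplicative (ZMod 2)) (m : ℤ)
    (hx : f x = Multiplicative.ofAdd 1) (h : f (x ^ m) = 1) : (2 : ℤ) ∣ m := by
  rw [map_zpow, hx, ← ofAdd_zsmul] at h
  rw [ofAdd_eq_one] at h
  have h2 : ((m : ZMod 2)) = 0 := by
    simpa [zsmul_eq_mul] using h
  exact (ZMod.intCast_zmod_eq_zero_iff_dvd m 2).mp h2

lemma key1 (m n : ℤ) (h : alA ^ m * beB ^ n = 1) : (2 : ℤ) ∣ m ∧ (2 : ℤ) ∣ n := by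
  constructor
  · have h1 := congrArg E1 h
    rw [map_mul, map_one, map_zpow, map_zpow, E1_beB, one_zpow, mul_one] at h1
    exact zmod_exp E1 m E1_alA (by rw [map_zpow]; exact h1)
  · have h1 := congrArg E2 h
    rw [map_mul, map_one, map_zpow, map_zpow, E2_alA, one_zpow, one_mul] at h1
    exact zmod_exp E2 n E2_beB (by rw [map_zpow]; exact h1)


def StK : Subgroup treeAut where
  carrier := {g | g ∈ G ∧ tau g false = false}
  one_mem' := ⟨one_mem _, tau_one false⟩
  mul_mem' := by
    rintro g h ⟨hg, hgf⟩ ⟨hh, hhf⟩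
    exact ⟨mul_mem hg hh, by rw [tau_mul, hhf, hgf]⟩
  inv_mem' := by
    rintro g ⟨hg, hgf⟩
    exact ⟨inv_mem hg, tau_inv_false_of_false hgf⟩

noncomputable def Y : ↥StK →* AbG :=
  MonoidHom.mk' (fun x => om x.1 true) (fun x y => by
    show om ((x * y : ↥StK) : treeAut) true = om (x : treeAut) true * om (y : treeAut) true
    rw [Subgroup.coe_mul, om_mul x.2.1 y.2.1, tau_true_of_false y.2.2])

lemma tau_A_true : tau A true = false := tau_false_of_true tau_A_false

def a2 : ↥StK := ⟨A * A, ⟨mul_mem memA memA, by rw [tau_mul, tau_A_false, tau_A_true]⟩⟩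
def bk : ↥StK := ⟨B, ⟨memB, tau_B_false⟩⟩

lemma Y_a2 : Y a2 = beB := by
  show om (A * A) true = beB
  rw [om_mul memA memA, tau_A_true, om_A_false, om_A_true, mul_one]

lemma Y_bk : Y bk = 1 := om_B_true

lemma key_step (m n : ℤ) (h : alA ^ (2 * m) * beB ^ (2 * n) = 1) :
    ∃ k : ℤ, alA ^ k = beB ^ m := by
  have hx : ((a2 ^ m * bk ^ (2 * n) : ↥StK) : treeAut) = A ^ (2 * m) * B ^ (2 * n) := by
    push_cast
    congr 1
    show ((A * A : treeAut)) ^ m = A ^ (2 * m)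
    rw [zpow_mul]
    norm_num
    rfl
  have hcomm : ((a2 ^ m * bk ^ (2 * n) : ↥StK) : treeAut) ∈ ⁅G, G⁆ := by
    rw [hx]
    exact (ab_iff (2 * m) (2 * n)).mpr h
  have hH := comm_le_Hsub hcomm
  obtain ⟨-, -, ho⟩ := hH
  have hY : om ((a2 ^ m * bk ^ (2 * n) : ↥StK) : treeAut) true = beB ^ m := by
    show Y (a2 ^ m * bk ^ (2 * n)) = beB ^ m
    rw [map_mul, map_zpow, map_zpow, Y_a2, Y_bk, one_zpow, mul_one]
  rw [hY] at ho
  exact Subgroup.mem_zpowers_iff.mp ho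

lemma aux_dvd : ∀ j : ℕ, ∀ m n : ℤ, alA ^ m * beB ^ n = 1 → (2 ^ j : ℤ) ∣ m := by
  intro j
  induction j with
  | zero => intro m n _; simpa using one_dvd m
  | succ j ih =>
    intro m n h
    obtain ⟨m', rfl⟩ := (key1 m n h).1
    obtain ⟨n', rfl⟩ := (key1 _ _ h).2
    obtain ⟨k, hk⟩ := key_step m' n' h
    have h2 : alA ^ k * beB ^ (-m') = 1 := by rw [zpow_neg, hk, mul_inv_cancel]
    have h3 := congrArg thetaH h2
    rw [map_mul, map_one, map_zpow, map_zpow, thetaH_alA, thetaH_beB] at h3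
    have h4 : alA ^ (-m') * beB ^ k = 1 := by rw [mul_comm]; exact h3
    have h5 : (2 ^ j : ℤ) ∣ m' := dvd_neg.mp (ih (-m') k h4)
    rw [pow_succ']
    exact mul_dvd_mul_left 2 h5

lemma dvd_all_pow_eq_zero {m : ℤ} (hm : ∀ j : ℕ, (2 ^ j : ℤ) ∣ m) : m = 0 := by
  by_contra h0
  have h2 := hm m.natAbs
  have hle : (2 ^ m.natAbs : ℤ) ≤ |m| := Int.le_of_dvd (abs_pos.mpr h0) ((dvd_abs _ _).mpr h2)
  have hlt : (m.natAbs : ℤ) < 2 ^ m.natAbs := by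
    exact_mod_cast Nat.lt_two_pow_self (n := m.natAbs)
  rw [Int.abs_eq_natAbs] at hle
  exact absurd hle (not_le.mpr hlt)

lemma key2 (m n : ℤ) (h : alA ^ m * beB ^ n = 1) : m = 0 ∧ n = 0 := by
  have h3 := congrArg thetaH h
  rw [map_mul, map_one, map_zpow, map_zpow, thetaH_alA, thetaH_beB] at h3
  have h4 : alA ^ n * beB ^ m = 1 := by rw [mul_comm]; exact h3
  exact ⟨dvd_all_pow_eq_zero fun j => aux_dvd j m n h,
    dvd_all_pow_eq_zero fun j => aux_dvd j n m h4⟩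

end Basilica

/-- the abelianization `G/[G,G]` is free abelian of rank `2`, with the
images of `a` and `b` as a free basis: every `g ∈ G` is `aᵐbⁿ` modulo `[G,G]`, and
`aᵐbⁿ ∈ [G,G]` iff `m = 0` and `n = 0`. -/
theorem abelianization_free_abelian_rank_two :
    (∀ g : treeAut, g ∈ G → ∃ m n : ℤ, ∃ h : treeAut, h ∈ ⁅G, G⁆ ∧ g = A ^ m * B ^ n * h) ∧
    (∀ m n : ℤ, A ^ m * B ^ n ∈ ⁅G, G⁆ ↔ m = 0 ∧ n = 0) := by
  constructor
  · intro g hg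
    have hof : ∃ m n : ℤ, Abelianization.of (⟨g, hg⟩ : ↥G) = alA ^ m * beB ^ n := by
      refine Subgroup.closure_induction
        (p := fun g hg => ∃ m n : ℤ, Abelianization.of (⟨g, hg⟩ : ↥G) = alA ^ m * beB ^ n)
        ?_ ?_ ?_ ?_ hg
      · rintro x (rfl | rfl)
        · exact ⟨1, 0, by rw [zpow_one, zpow_zero, mul_one]; rfl⟩
        · exact ⟨0, 1, by rw [zpow_one, zpow_zero, one_mul]; rfl⟩
      · exact ⟨0, 0, by rw [zpow_zero, zpow_zero, mul_one]; exact map_one _⟩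
      · rintro x y hx hy ⟨m1, n1, ih1⟩ ⟨m2, n2, ih2⟩
        refine ⟨m1 + m2, n1 + n2, ?_⟩
        have hxy : (⟨x * y, mul_mem hx hy⟩ : ↥G) = ⟨x, hx⟩ * ⟨y, hy⟩ := rfl
        rw [hxy, map_mul, ih1, ih2, zpow_add, zpow_add]
        simp [mul_comm, mul_left_comm, mul_assoc]
      · rintro x hx ⟨m1, n1, ih⟩
        refine ⟨-m1, -n1, ?_⟩
        have hxi : (⟨x⁻¹, inv_mem hx⟩ : ↥G) = (⟨x, hx⟩ : ↥G)⁻¹ := rfl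
        rw [hxi, map_inv, ih, zpow_neg, zpow_neg, mul_inv]
    obtain ⟨m, n, hof⟩ := hof
    set hG : ↥G := (⟨B, memB⟩ : ↥G) ^ (-n) * (⟨A, memA⟩ : ↥G) ^ (-m) * ⟨g, hg⟩ with hdef
    refine ⟨m, n, (hG : treeAut), ?_, ?_⟩
    · apply (mem_comm_iff hG).mpr
      rw [hdef, map_mul, map_mul, map_zpow, map_zpow, hof]
      show beB ^ (-n) * alA ^ (-m) * (alA ^ m * beB ^ n) = 1
      rw [zpow_neg, zpow_neg, mul_assoc, inv_mul_cancel_left, inv_mul_cancel]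
    · have hval : (hG : treeAut) = B ^ (-n) * A ^ (-m) * g := by
        rw [hdef]; push_cast; rfl
      rw [hval]
      group
  · intro m n
    constructor
    · intro h; exact key2 m n ((ab_iff m n).mp h)
    · rintro ⟨rfl, rfl⟩
      simpa using one_mem ⁅G, G⁆
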